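/- Let c > 1, 0 < λ < 1, X ≥ 2. Then for any real y and any integer n, ∫_n^{n+1} |S(x,y)|² dx ≪ X (log X)³, where S(x,y) = Σ_{λX < p ≤ X} (log p) e(p^c x + p^d y), with implied constant depending only on c, d, λ. -/

import Mathlib

open Real Finset intervalIntegral

noncomputable def ee (t x : ℝ) : ℂ := Complex.exp (2 * π * Complex.I * ((t * x : ℝ) : ℂ))

lemma norm_ee (t x : ℝ) : ‖ee t x‖ = 1 := by
  rw [ee, Complex.norm_exp]
  have : (2 * ↑π * Complex.I * ((t*x:ℝ):ℂ)).re = 0 := by simp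
  rw [this, Real.exp_zero]

lemma ee_mul_conj (t s x : ℝ) : ee t x * (starRingEnd ℂ) (ee s x) = ee (t - s) x := by
  rw [ee, ee, ee, ← Complex.exp_conj, ← Complex.exp_add]
  congr 1
  rw [map_mul, map_mul, map_mul]
  simp only [Complex.conj_I, Complex.conj_ofReal, map_ofNat]
  push_cast
  ring

lemma cont_ee (t : ℝ) : Continuous (ee t) := by
  unfold ee
  fun_prop

lemma integral_ee_ne (t : ℝ) (ht : t ≠ 0) (a : ℝ) :
    ‖∫ x in a..(a+1), ee t x‖ ≤ 1 / |t| := by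
  have h2 : (2 * (π:ℂ) * Complex.I * t) ≠ 0 := by
    simp [Complex.ext_iff, Real.pi_ne_zero, ht]
  have : ∀ x : ℝ, ee t x = Complex.exp ((2 * π * Complex.I * t) * x) := by
    intro x; rw [ee]; congr 1; push_cast; ring
  rw [intervalIntegral.integral_congr (fun x _ => this x), integral_exp_mul_complex h2]
  rw [norm_div]
  have hn : ‖(2 * (π:ℂ) * Complex.I * t)‖ = 2 * π * |t| := by
    simp [norm_mul, Complex.norm_real, Real.norm_eq_abs, abs_of_pos Real.pi_pos]
  rw [hn]
  have h1 : ‖Complex.exp (2 * ↑π * Complex.I * ↑t * ↑(a + 1)) - Complex.exp (2 * ↑π * Complex.I * ↑t * ↑a)‖ ≤ 2 := by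
    refine (norm_sub_le _ _).trans ?_
    have e1 : ∀ b : ℝ, ‖Complex.exp (2 * ↑π * Complex.I * ↑t * ↑b)‖ = 1 := by
      intro b
      rw [Complex.norm_exp]
      ring_nf
      simp
    rw [e1, e1]; norm_num
  have hpos : 0 < 2 * π * |t| := by positivity
  rw [div_le_div_iff₀ hpos (by positivity : (0:ℝ) < |t|)]
  calc ‖_ - _‖ * |t| ≤ 2 * |t| := by exact mul_le_mul_of_nonneg_right h1 (abs_nonneg t)
    _ ≤ 1 * (2 * π * |t|) := by nlinarith [Real.pi_gt_three, abs_nonneg t]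

lemma rpow_gap {c : ℝ} (hc : 1 ≤ c) {a b : ℝ} (ha : 1 ≤ a) (hab : a ≤ b) :
    b - a ≤ b ^ c - a ^ c := by
  have hmono : MonotoneOn (fun t : ℝ => t ^ c - t) (Set.Ici 1) := by
    apply monotoneOn_of_deriv_nonneg (convex_Ici 1)
    · exact (ContinuousOn.rpow_const continuousOn_id
        (fun x hx => Or.inl (by have := Set.mem_Ici.mp hx; positivity))).sub continuousOn_id
    · intro x hx
      rw [interior_Ici] at hx
      have hx1 : (1:ℝ) < x := hx
      exact ((Real.hasDerivAt_rpow_const (Or.inl (by linarith))).sub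
        (hasDerivAt_id x)).differentiableAt.differentiableWithinAt
    · intro x hx
      rw [interior_Ici] at hx
      have hx1 : (1:ℝ) < x := hx
      have hD : HasDerivAt (fun t : ℝ => t ^ c - t) (c * x ^ (c - 1) - 1) x :=
        (Real.hasDerivAt_rpow_const (Or.inl (by linarith))).sub (hasDerivAt_id x)
      rw [hD.deriv]
      have h1 : (1:ℝ) ≤ x ^ (c - 1) := Real.one_le_rpow (le_of_lt hx1) (by linarith)
      nlinarith
  have := hmono (Set.mem_Ici.mpr ha) (Set.mem_Ici.mpr (ha.trans hab)) hab
  simp only [] at this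
  linarith [this]

noncomputable def mm (p q : ℕ) : ℝ := if p = q then 1 else 1 / |(p:ℝ) - (q:ℝ)|

lemma mm_nonneg (p q : ℕ) : 0 ≤ mm p q := by
  unfold mm; split <;> positivity

lemma term_bound {c : ℝ} (hc : 1 < c) {p q : ℕ} (hp : 1 ≤ p) (hq : 1 ≤ q) (a : ℝ) :
    ‖∫ x in a..(a+1), ee ((p:ℝ)^c - (q:ℝ)^c) x‖ ≤ mm p q := by
  rcases eq_or_ne p q with h | h
  · subst h
    rw [mm, if_pos rfl, sub_self]
    have e0 : ∀ x : ℝ, ee 0 x = 1 := by intro x; simp [ee]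
    rw [intervalIntegral.integral_congr (fun x _ => e0 x), intervalIntegral.integral_const]
    simp
  · rw [mm, if_neg h]
    have hpq : ((p:ℝ) - (q:ℝ)) ≠ 0 := by
      simp only [sub_ne_zero, ne_eq, Nat.cast_inj]; exact h
    have habs : 0 < |(p:ℝ) - (q:ℝ)| := abs_pos.mpr hpq
    have key : |(p:ℝ) - (q:ℝ)| ≤ |(p:ℝ)^c - (q:ℝ)^c| := by
      rcases lt_or_gt_of_ne h with hlt | hlt
    -- p < q
      · have h1 : (1:ℝ) ≤ (p:ℝ) := by exact_mod_cast hp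
        have h2 : (p:ℝ) ≤ (q:ℝ) := by exact_mod_cast hlt.le
        have := rpow_gap hc.le h1 h2
        rw [abs_sub_comm, abs_of_nonneg (by linarith), abs_sub_comm,
          abs_of_nonneg (by linarith)]
        linarith
      · have h1 : (1:ℝ) ≤ (q:ℝ) := by exact_mod_cast hq
        have h2 : (q:ℝ) ≤ (p:ℝ) := by exact_mod_cast hlt.le
        have := rpow_gap hc.le h1 h2
        rw [abs_of_nonneg (by linarith), abs_of_nonneg (by linarith)]
        linarith
    have ht : ((p:ℝ)^c - (q:ℝ)^c) ≠ 0 := by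
      intro h0
      rw [h0, abs_zero] at key
      exact absurd (le_antisymm key (abs_nonneg _)) (ne_of_gt habs)
    refine (integral_ee_ne _ ht a).trans ?_
    exact one_div_le_one_div_of_le habs key

lemma row_bound (N p : ℕ) (hp : p < N) :
    ∑ q ∈ Finset.range N, mm p q ≤ 3 + 2 * Real.log N := by
  have hH : ∑ j ∈ Finset.range N, (1 / ((j:ℝ) + 1)) ≤ 1 + Real.log N := by
    have h1 : ((harmonic N : ℚ) : ℝ) = ∑ j ∈ Finset.range N, (1 / ((j:ℝ) + 1)) := by
      unfold harmonic
      push_cast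
      simp [one_div]
    calc ∑ j ∈ Finset.range N, (1 / ((j:ℝ) + 1)) = ((harmonic N : ℚ) : ℝ) := h1.symm
      _ ≤ 1 + Real.log N := harmonic_le_one_add_log N
  have hsplit : ∑ q ∈ Finset.range N, mm p q
      = (∑ q ∈ Finset.range p, mm p q) + ∑ q ∈ Finset.Ico p N, mm p q := by
    rw [Finset.range_eq_Ico, ← Finset.sum_Ico_consecutive _ (Nat.zero_le p) (le_of_lt hp), Finset.range_eq_Ico]
  have hbot : ∑ q ∈ Finset.Ico p N, mm p q = mm p p + ∑ q ∈ Finset.Ico (p+1) N, mm p q :=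
    Finset.sum_eq_sum_Ico_succ_bot hp _
  have h2 : ∑ q ∈ Finset.range p, mm p q ≤ 1 + Real.log N := by
    have e1 : ∀ j ∈ Finset.range p, mm p (p - 1 - j) = 1 / ((j:ℝ) + 1) := by
      intro j hj
      have hj' : j < p := Finset.mem_range.mp hj
      have hne : p ≠ p - 1 - j := by omega
      rw [mm, if_neg hne]
      have hc : ((p - 1 - j : ℕ):ℝ) = (p:ℝ) - ((j:ℝ) + 1) := by
        have h' : p - 1 - j = p - (j+1) := by omega
        rw [h', Nat.cast_sub (by omega)]
        push_cast; ring
      rw [hc]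
      have h2 : (p:ℝ) - ((p:ℝ) - ((j:ℝ)+1)) = (j:ℝ) + 1 := by ring
      rw [h2, abs_of_pos (by positivity)]
    calc ∑ q ∈ Finset.range p, mm p q = ∑ j ∈ Finset.range p, mm p (p - 1 - j) :=
          (Finset.sum_range_reflect (fun q => mm p q) p).symm
      _ = ∑ j ∈ Finset.range p, (1 / ((j:ℝ) + 1)) := Finset.sum_congr rfl e1
      _ ≤ ∑ j ∈ Finset.range N, (1 / ((j:ℝ) + 1)) := by
          apply Finset.sum_le_sum_of_subset_of_nonneg
          · exact Finset.range_subset_range.mpr (le_of_lt hp)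
          · intro i _ _; positivity
      _ ≤ 1 + Real.log N := hH
  have h3 : ∑ q ∈ Finset.Ico (p+1) N, mm p q ≤ 1 + Real.log N := by
    have e1 : ∀ i ∈ Finset.range (N - (p+1)), mm p (p + 1 + i) = 1 / ((i:ℝ) + 1) := by
      intro i _
      have hne : p ≠ p + 1 + i := by omega
      rw [mm, if_neg hne]
      have : (p:ℝ) - ((p + 1 + i : ℕ):ℝ) = -((i:ℝ) + 1) := by push_cast; ring
      rw [this, abs_neg, abs_of_pos (by positivity)]
    calc ∑ q ∈ Finset.Ico (p+1) N, mm p q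
        = ∑ i ∈ Finset.range (N - (p+1)), mm p (p + 1 + i) := Finset.sum_Ico_eq_sum_range _ _ _
      _ = ∑ i ∈ Finset.range (N - (p+1)), (1 / ((i:ℝ) + 1)) := Finset.sum_congr rfl e1
      _ ≤ ∑ j ∈ Finset.range N, (1 / ((j:ℝ) + 1)) := by
          apply Finset.sum_le_sum_of_subset_of_nonneg
          · exact Finset.range_subset_range.mpr (by omega)
          · intro i _ _; positivity
      _ ≤ 1 + Real.log N := hH
  have hmm : mm p p = 1 := by rw [mm, if_pos rfl]
  rw [hsplit, hbot, hmm]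
  linarith

lemma double_sum_bound (N : ℕ) :
    ∑ p ∈ Finset.range N, ∑ q ∈ Finset.range N, mm p q ≤ N * (3 + 2 * Real.log N) := by
  calc ∑ p ∈ Finset.range N, ∑ q ∈ Finset.range N, mm p q
      ≤ ∑ _p ∈ Finset.range N, (3 + 2 * Real.log N) :=
        Finset.sum_le_sum (fun p hp => row_bound N p (Finset.mem_range.mp hp))
    _ = N * (3 + 2 * Real.log N) := by rw [Finset.sum_const, Finset.card_range, nsmul_eq_mul]

theorem mean_value_unit_interval (c d lam : ℝ) (hd : 1 < d) (hdc : d < c) (hlam0 : 0 < lam)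
    (hlam1 : lam < 1) :
    ∃ C : ℝ, 0 < C ∧ ∀ X : ℝ, 2 ≤ X → ∀ y : ℝ, ∀ n : ℤ,
      (∫ x in (n : ℝ)..((n : ℝ) + 1),
        ‖∑ p ∈ (Finset.range (⌊X⌋₊ + 1)).filter
            (fun p : ℕ => p.Prime ∧ lam * X < (p : ℝ) ∧ (p : ℝ) ≤ X),
          (Real.log p : ℂ) *
            Complex.exp (2 * π * Complex.I * (((p : ℝ) ^ c * x + (p : ℝ) ^ d * y : ℝ) : ℂ))‖ ^ 2)
      ≤ C * X * Real.log X ^ 3 := by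
  have hc1 : 1 < c := hd.trans hdc
  refine ⟨18, by norm_num, ?_⟩
  intro X hX y n
  set N : ℕ := ⌊X⌋₊ + 1 with hN
  set A : Finset ℕ := (Finset.range N).filter
      (fun p : ℕ => p.Prime ∧ lam * X < (p : ℝ) ∧ (p : ℝ) ≤ X) with hA
  set L : ℝ := Real.log X with hL
  have hL2 : Real.log 2 ≤ L := Real.log_le_log two_pos hX
  have hLpos : 0 < L := lt_of_lt_of_le (by positivity) (le_trans Real.log_two_gt_d9.le hL2)
  -- coefficients
  set a : ℕ → ℂ := fun p => (Real.log p : ℂ) *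
      Complex.exp (2 * π * Complex.I * (((p:ℝ) ^ d * y : ℝ) : ℂ)) with ha
  -- rewrite summand
  have hterm : ∀ (p : ℕ) (x : ℝ),
      (Real.log p : ℂ) * Complex.exp (2 * π * Complex.I *
        (((p : ℝ) ^ c * x + (p : ℝ) ^ d * y : ℝ) : ℂ))
      = a p * ee ((p:ℝ)^c) x := by
    intro p x
    have key : Complex.exp (2 * ↑π * Complex.I * (((p:ℝ) ^ d * y : ℝ) : ℂ)) *
        Complex.exp (2 * ↑π * Complex.I * ((((p:ℝ) ^ c * x) : ℝ) : ℂ))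
        = Complex.exp (2 * ↑π * Complex.I *
            ((((p:ℝ) ^ c * x + (p:ℝ) ^ d * y) : ℝ) : ℂ)) := by
      rw [← Complex.exp_add]
      congr 1
      push_cast
      ring
    show _ = ((Real.log (p:ℝ) : ℂ) *
        Complex.exp (2 * ↑π * Complex.I * (((p:ℝ) ^ d * y : ℝ) : ℂ))) * ee ((p:ℝ)^c) x
    rw [ee, mul_assoc ((Real.log (p:ℝ) : ℝ) : ℂ), key]
  set S : ℝ → ℂ := fun x => ∑ p ∈ A, a p * ee ((p:ℝ)^c) x with hS
  have hScont : Continuous S := by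
    apply continuous_finset_sum
    intro p _
    exact continuous_const.mul (cont_ee _)
  have hGcont : Continuous (fun x => S x * (starRingEnd ℂ) (S x)) :=
    hScont.mul (Complex.continuous_conj.comp hScont)
  -- step 1 : rewrite integrand
  have step1 : (∫ x in (n : ℝ)..((n : ℝ) + 1),
      ‖∑ p ∈ A, (Real.log p : ℂ) * Complex.exp (2 * π * Complex.I *
        (((p : ℝ) ^ c * x + (p : ℝ) ^ d * y : ℝ) : ℂ))‖ ^ 2)
      = (∫ x in (n : ℝ)..((n : ℝ) + 1), S x * (starRingEnd ℂ) (S x)).re := by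
    have e1 : ∀ x : ℝ, ‖∑ p ∈ A, (Real.log p : ℂ) * Complex.exp (2 * π * Complex.I *
        (((p : ℝ) ^ c * x + (p : ℝ) ^ d * y : ℝ) : ℂ))‖ ^ 2
        = (S x * (starRingEnd ℂ) (S x)).re := by
      intro x
      have : (∑ p ∈ A, (Real.log p : ℂ) * Complex.exp (2 * π * Complex.I *
          (((p : ℝ) ^ c * x + (p : ℝ) ^ d * y : ℝ) : ℂ))) = S x :=
        Finset.sum_congr rfl (fun p _ => hterm p x)
      rw [this, Complex.mul_conj, Complex.normSq_eq_norm_sq,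
        Complex.ofReal_re]
    rw [intervalIntegral.integral_congr (fun x _ => e1 x)]
    exact Complex.reCLM.intervalIntegral_comp_comm (hGcont.intervalIntegrable _ _)
  rw [show (∫ x in (n : ℝ)..((n : ℝ) + 1),
        ‖∑ p ∈ (Finset.range (⌊X⌋₊ + 1)).filter
            (fun p : ℕ => p.Prime ∧ lam * X < (p : ℝ) ∧ (p : ℝ) ≤ X),
          (Real.log p : ℂ) *
            Complex.exp (2 * π * Complex.I * (((p : ℝ) ^ c * x + (p : ℝ) ^ d * y : ℝ) : ℂ))‖ ^ 2)
      = (∫ x in (n : ℝ)..((n : ℝ) + 1), S x * (starRingEnd ℂ) (S x)).re from step1]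
  -- step 2 : expand
  have step2 : (∫ x in (n : ℝ)..((n : ℝ) + 1), S x * (starRingEnd ℂ) (S x))
      = ∑ p ∈ A, ∑ q ∈ A, (a p * (starRingEnd ℂ) (a q)) *
          ∫ x in (n : ℝ)..((n : ℝ) + 1), ee ((p:ℝ)^c - (q:ℝ)^c) x := by
    have e2 : ∀ x : ℝ, S x * (starRingEnd ℂ) (S x)
        = ∑ p ∈ A, ∑ q ∈ A, (a p * (starRingEnd ℂ) (a q)) * ee ((p:ℝ)^c - (q:ℝ)^c) x := by
      intro x
      rw [hS]
      simp only [map_sum, map_mul]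
      rw [Finset.sum_mul_sum]
      refine Finset.sum_congr rfl (fun p _ => Finset.sum_congr rfl (fun q _ => ?_))
      rw [← ee_mul_conj ((p:ℝ)^c) ((q:ℝ)^c) x]
      ring
    rw [intervalIntegral.integral_congr (fun x _ => e2 x)]
    rw [intervalIntegral.integral_finset_sum]
    · refine Finset.sum_congr rfl (fun p _ => ?_)
      rw [intervalIntegral.integral_finset_sum]
      · exact Finset.sum_congr rfl (fun q _ => intervalIntegral.integral_const_mul _ _)
      · intro q _
        exact (continuous_const.mul (cont_ee _)).intervalIntegrable _ _
    · intro p _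
      refine (Continuous.intervalIntegrable ?_ _ _)
      exact continuous_finset_sum _ (fun q _ => continuous_const.mul (cont_ee _))
  rw [step2]
  -- step 3 : bound
  have hnormA : ∀ p ∈ A, ‖a p‖ ≤ L := by
    intro p hp
    rw [hA, Finset.mem_filter] at hp
    obtain ⟨_, hprime, _, hpX⟩ := hp
    rw [ha]
    rw [norm_mul, Complex.norm_real, Complex.norm_exp]
    have : (2 * ↑π * Complex.I * (((p:ℝ) ^ d * y : ℝ) : ℂ)).re = 0 := by simp
    rw [this, Real.exp_zero, mul_one, Real.norm_eq_abs]
    have hp2 : (2:ℝ) ≤ (p:ℝ) := by exact_mod_cast hprime.two_le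
    rw [abs_of_nonneg (Real.log_nonneg (by linarith))]
    exact Real.log_le_log (by linarith) hpX
  have hp1 : ∀ p ∈ A, 1 ≤ p := by
    intro p hp
    rw [hA, Finset.mem_filter] at hp
    exact hp.2.1.one_le
  have step3 : (∑ p ∈ A, ∑ q ∈ A, (a p * (starRingEnd ℂ) (a q)) *
          ∫ x in (n : ℝ)..((n : ℝ) + 1), ee ((p:ℝ)^c - (q:ℝ)^c) x).re
      ≤ L^2 * ∑ p ∈ Finset.range N, ∑ q ∈ Finset.range N, mm p q := by
    refine le_trans (Complex.re_le_norm _) ?_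
    refine le_trans (norm_sum_le _ _) ?_
    have inner : ∀ p ∈ A, ‖∑ q ∈ A, (a p * (starRingEnd ℂ) (a q)) *
        ∫ x in (n : ℝ)..((n : ℝ) + 1), ee ((p:ℝ)^c - (q:ℝ)^c) x‖
        ≤ ∑ q ∈ A, L^2 * mm p q := by
      intro p hp
      refine le_trans (norm_sum_le _ _) (Finset.sum_le_sum (fun q hq => ?_))
      have hconj : ‖(starRingEnd ℂ) (a q)‖ = ‖a q‖ := by
        rw [Complex.norm_conj]
      rw [norm_mul, norm_mul, hconj]
      have h1 := hnormA p hp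
      have h2 := hnormA q hq
      have h3 := term_bound hc1 (hp1 p hp) (hp1 q hq) ((n:ℝ))
      have hnn : (0:ℝ) ≤ ‖a p‖ := norm_nonneg _
      have hnn2 : (0:ℝ) ≤ ‖a q‖ := norm_nonneg _
      have hnn3 : (0:ℝ) ≤ ‖∫ x in (n : ℝ)..((n : ℝ) + 1), ee ((p:ℝ)^c - (q:ℝ)^c) x‖ :=
        norm_nonneg _
      have hmul : ‖a p‖ * ‖a q‖ ≤ L * L := mul_le_mul h1 h2 hnn2 (le_of_lt hLpos)
      calc ‖a p‖ * ‖a q‖ * ‖∫ x in (n : ℝ)..((n : ℝ) + 1), ee ((p:ℝ)^c - (q:ℝ)^c) x‖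
          ≤ (L * L) * mm p q := mul_le_mul hmul h3 hnn3 (by positivity)
        _ = L^2 * mm p q := by ring
    refine le_trans (Finset.sum_le_sum inner) ?_
    have hsub : A ⊆ Finset.range N := Finset.filter_subset _ _
    have ext1 : ∑ p ∈ A, ∑ q ∈ A, L^2 * mm p q
        ≤ ∑ p ∈ A, ∑ q ∈ Finset.range N, L^2 * mm p q :=
      Finset.sum_le_sum (fun p _ => Finset.sum_le_sum_of_subset_of_nonneg hsub
        (fun q _ _ => mul_nonneg (sq_nonneg L) (mm_nonneg p q)))
    have ext2 : ∑ p ∈ A, ∑ q ∈ Finset.range N, L^2 * mm p q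
        ≤ ∑ p ∈ Finset.range N, ∑ q ∈ Finset.range N, L^2 * mm p q :=
      Finset.sum_le_sum_of_subset_of_nonneg hsub
        (fun p _ _ => Finset.sum_nonneg (fun q _ => mul_nonneg (sq_nonneg L) (mm_nonneg p q)))
    refine le_trans (ext1.trans ext2) (le_of_eq ?_)
    simp_rw [Finset.mul_sum]
  refine le_trans step3 ?_
  -- step 4 : numerics
  have hNpos : (1:ℝ) ≤ (N:ℝ) := by exact_mod_cast Nat.succ_le_succ (Nat.zero_le _)
  have hNle : (N:ℝ) ≤ X + 1 := by
    rw [hN]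
    push_cast
    have := Nat.floor_le (by linarith : (0:ℝ) ≤ X)
    linarith
  have hN2X : (N:ℝ) ≤ 2 * X := by linarith
  have hlogN : Real.log N ≤ 2 * L := by
    calc Real.log N ≤ Real.log (2 * X) := Real.log_le_log (by linarith) (by linarith)
      _ = Real.log 2 + Real.log X := Real.log_mul two_ne_zero (by linarith)
      _ ≤ L + L := by rw [hL]; exact add_le_add hL2 (le_refl _)
      _ = 2 * L := by ring
  have hlogNnn : 0 ≤ Real.log N := Real.log_nonneg hNpos
  have h3le : (3:ℝ) ≤ 5 * L := by nlinarith [Real.log_two_gt_d9.le.trans hL2]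
  have hfac : (3:ℝ) + 2 * Real.log N ≤ 9 * L := by linarith
  have hds := double_sum_bound N
  have hkey : ∑ p ∈ Finset.range N, ∑ q ∈ Finset.range N, mm p q ≤ 18 * X * L := by
    calc ∑ p ∈ Finset.range N, ∑ q ∈ Finset.range N, mm p q
        ≤ (N:ℝ) * (3 + 2 * Real.log N) := hds
      _ ≤ (2 * X) * (9 * L) := mul_le_mul hN2X hfac (by linarith) (by linarith)
      _ = 18 * X * L := by ring
  calc L^2 * ∑ p ∈ Finset.range N, ∑ q ∈ Finset.range N, mm p q
      ≤ L^2 * (18 * X * L) := mul_le_mul_of_nonneg_left hkey (sq_nonneg L)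
    _ = 18 * X * L ^ 3 := by ring
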